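/- Let α, β be labels and σ₁, σ₂, σ₃ lists of labels such that every element of σ₁ lies in ds {β}, σ₂ has length at most 1 with every element equal to α, and every element of σ₃ lies in ds {α, β}. Then (|σ₁ ++ σ₂ ++ σ₃| -s ds {β}) ≼_mul |[α]| = {α}. -/

import Mathlib

open Relation

universe u v

variable {α : Type u} {β : Type v}

/-- down-set of a set of labels -/
def ds (r : β → β → Prop) (S : Set β) : Set β := {b | ∃ a ∈ S, r b a}

/-- down-set of a multiset of labels -/
def dm (r : β → β → Prop) (M : Multiset β) : Set β := ds r {a | a ∈ M}

/-- down-set of a list of labels -/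
def dl (r : β → β → Prop) (σ : List β) : Set β := ds r {a | a ∈ σ}

/-- `M -s S`: remove from the multiset `M` all occurrences of elements of the set `S` -/
noncomputable def msub (M : Multiset β) (S : Set β) : Multiset β :=
  @Multiset.filter β (fun a => a ∉ S) (Classical.decPred _) M

/-- `M ≼_mul N` -/
def mulLe (r : β → β → Prop) (M N : Multiset β) : Prop :=
  ∃ I J K : Multiset β, M = I + K ∧ N = I + J ∧ ∀ k ∈ K, k ∈ dm r J

/-- `M ≺_mul N`: the multiset extension of `r` -/
def mulLt (r : β → β → Prop) (M N : Multiset β) : Prop :=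
  ∃ I J K : Multiset β, M = I + K ∧ N = I + J ∧ (∀ k ∈ K, k ∈ dm r J) ∧ J ≠ 0

/-- the one-step multiset extension of `r` -/
def mult1 (r : β → β → Prop) (M N : Multiset β) : Prop :=
  ∃ (a : β) (I K : Multiset β), M = I + K ∧ N = I + {a} ∧ ∀ b ∈ K, r b a

/-- the lexicographic maximum measure `|σ|` -/
noncomputable def lexmax (r : β → β → Prop) : List β → Multiset β
  | [] => 0
  | a :: σ => {a} + msub (lexmax r σ) (ds r {a})

/-- the quadruple of label lists `(τ, σ, σ', τ')` is decreasing -/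
def Decreasing (r : β → β → Prop) (τ σ σ' τ' : List β) : Prop :=
  mulLe r (lexmax r (σ ++ τ')) (lexmax r τ + lexmax r σ) ∧
  mulLe r (lexmax r (τ ++ σ')) (lexmax r τ + lexmax r σ)

/-- labeled rewrite sequences of the labeled ARS `B` -/
inductive LSeq (B : α → β → α → Prop) : α → List β → α → Prop
  | nil (a : α) : LSeq B a [] a
  | cons {a b c : α} {l : β} {σ : List β} :
      B a l b → LSeq B b σ c → LSeq B a (l :: σ) c

/-- labeled conversions of the labeled ARS `B` -/
inductive Conv (B : α → β → α → Prop) : α → List β → α → Prop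
  | nil (a : α) : Conv B a [] a
  | fwd {a b c : α} {l : β} {σ : List β} :
      B a l b → Conv B b σ c → Conv B a (l :: σ) c
  | bwd {a b c : α} {l : β} {σ : List β} :
      B b l a → Conv B b σ c → Conv B a (l :: σ) c

/-- the local peak `b ←lb a →lc c` is decreasing with respect to conversions -/
def LDConv (B : α → β → α → Prop) (r : β → β → Prop) (b c : α) (lb lc : β) : Prop :=
  ∃ (d b1 b2 c1 c2 : α) (σ1 σ3 τ1 τ3 : List β),
    Conv B b σ1 b1 ∧ (∀ l ∈ σ1, l ∈ ds r ({lc} : Set β)) ∧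
    (b1 = b2 ∨ B b1 lb b2) ∧
    Conv B b2 σ3 d ∧ (∀ l ∈ σ3, l ∈ ds r ({lc, lb} : Set β)) ∧
    Conv B c τ1 c1 ∧ (∀ l ∈ τ1, l ∈ ds r ({lb} : Set β)) ∧
    (c1 = c2 ∨ B c1 lc c2) ∧
    Conv B c2 τ3 d ∧ (∀ l ∈ τ3, l ∈ ds r ({lc, lb} : Set β))

/-- confluence of an abstract rewrite system -/
def Confluent (A : α → α → Prop) : Prop :=
  ∀ a b c : α, ReflTransGen A a b → ReflTransGen A a c →
    ∃ d, ReflTransGen A b d ∧ ReflTransGen A c d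

/-!
The measure only shrinks lists: `|σ ++ τ| ≤ σ + |τ|`. Hence removing `ds {β}` kills the
contribution of `σ₁` entirely. If `σ₂ = []`, what survives of `|σ₃|` lies in `ds {α}`. If
`σ₂ = [α]`, the head `α` has already removed `ds {α}` from `|σ₃|`, so after removing `ds {β}` at
most the single `α` is left, and `M ≤ N` implies `M ≼_mul N`.
-/

section Labels

variable {r : β → β → Prop}

lemma ds_union (S T : Set β) : ds r (S ∪ T) = ds r S ∪ ds r T := by
  ext b
  simp only [ds, Set.mem_union, Set.mem_ofPred_eq, or_and_right, exists_or]

@[simp]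
lemma dm_singleton (a : β) : dm r {a} = ds r {a} := by
  simp [dm]

lemma mem_msub {M : Multiset β} {S : Set β} {a : β} : a ∈ msub M S ↔ a ∈ M ∧ a ∉ S :=
  @Multiset.mem_filter β (· ∉ S) (Classical.decPred _) a M

lemma msub_le (M : Multiset β) (S : Set β) : msub M S ≤ M :=
  @Multiset.filter_le β _ (Classical.decPred _) M

lemma msub_mono {M N : Multiset β} (h : M ≤ N) (S : Set β) : msub M S ≤ msub N S :=
  @Multiset.filter_le_filter β _ (Classical.decPred _) M N h

lemma msub_add (M N : Multiset β) (S : Set β) : msub (M + N) S = msub M S + msub N S :=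
  @Multiset.filter_add β _ (Classical.decPred _) M N

lemma msub_msub (M : Multiset β) (S T : Set β) : msub (msub M S) T = msub M (S ∪ T) := by
  classical
  refine Multiset.ext.mpr fun a => ?_
  simp only [msub, Multiset.count_filter, Set.mem_union, not_or]
  split_ifs <;> tauto

lemma msub_eq_zero {M : Multiset β} {S : Set β} (h : ∀ a ∈ M, a ∈ S) : msub M S = 0 :=
  @Multiset.filter_eq_nil β _ (Classical.decPred _) M |>.mpr fun a ha => not_not.mpr (h a ha)

lemma lexmax_append_le (σ τ : List β) : lexmax r (σ ++ τ) ≤ σ + lexmax r τ := by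
  induction σ with
  | nil => simp
  | cons a σ ih =>
    calc lexmax r (a :: σ ++ τ) ≤ {a} + lexmax r (σ ++ τ) :=
          add_le_add_right (msub_le _ _) _
      _ ≤ {a} + (σ + lexmax r τ) := add_le_add_right ih _
      _ = (a :: σ : List β) + lexmax r τ := by rw [← Multiset.cons_coe, Multiset.cons_add]; rfl

lemma lexmax_le (σ : List β) : lexmax r σ ≤ σ := by
  simpa [lexmax] using lexmax_append_le (r := r) σ []

lemma mulLe_of_le {M N : Multiset β} (h : M ≤ N) : mulLe r M N :=
  let ⟨J, hN⟩ := Multiset.le_iff_exists_add.mp h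
  ⟨M, J, 0, by simp, hN, by simp⟩

lemma mulLe_of_forall_mem_dm {M N : Multiset β} (h : ∀ k ∈ M, k ∈ dm r N) : mulLe r M N :=
  ⟨0, N, M, by simp, by simp, h⟩

end Labels

theorem decomposition_imp_mulLe_general {β : Type v} (r : β → β → Prop)
    (la lb : β) (σ1 σ2 σ3 : List β)
    (h1 : ∀ l ∈ σ1, l ∈ ds r ({lb} : Set β))
    (h2 : σ2.length ≤ 1) (h2' : ∀ l ∈ σ2, l = la)
    (h3 : ∀ l ∈ σ3, l ∈ ds r ({la, lb} : Set β)) :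
    mulLe r (msub (lexmax r (σ1 ++ σ2 ++ σ3)) (ds r ({lb} : Set β)))
      ({la} : Multiset β) := by
  have hσ3 : ∀ l ∈ lexmax r σ3, l ∈ ds r {la} ∪ ds r {lb} := fun l hl => by
    rw [← ds_union, ← Set.insert_eq]
    exact h3 l (Multiset.mem_coe.mp (Multiset.mem_of_le (lexmax_le σ3) hl))
  have hle : msub (lexmax r (σ1 ++ σ2 ++ σ3)) (ds r {lb}) ≤
      msub (lexmax r (σ2 ++ σ3)) (ds r {lb}) :=
    calc _ ≤ msub ((σ1 : Multiset β) + lexmax r (σ2 ++ σ3)) (ds r {lb}) :=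
          msub_mono (List.append_assoc σ1 σ2 σ3 ▸ lexmax_append_le σ1 _) _
      _ = _ := by rw [msub_add, msub_eq_zero (by simpa using h1), zero_add]
  have hσ2 : σ2 = [] ∨ σ2 = [la] := by
    rw [List.eq_replicate_iff.mpr ⟨rfl, h2'⟩]
    interval_cases σ2.length <;> simp
  rcases hσ2 with rfl | rfl
  · refine mulLe_of_forall_mem_dm fun k hk => ?_
    obtain ⟨hk, hklb⟩ := mem_msub.mp (Multiset.mem_of_le hle hk)
    simpa [hklb] using hσ3 k hk
  · refine mulLe_of_le (hle.trans ?_)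
    calc msub (lexmax r (la :: σ3)) (ds r {lb})
        = msub {la} (ds r {lb}) + msub (lexmax r σ3) (ds r {la} ∪ ds r {lb}) := by
          rw [lexmax, msub_add, msub_msub]
      _ ≤ {la} := by rw [msub_eq_zero hσ3, add_zero]; exact msub_le _ _

/-- key step towards the alternative formulation of local
decreasingness -/
theorem decomposition_imp_mulLe {β : Type v} (r : β → β → Prop)
    (htrans : Transitive r) (hirrefl : Irreflexive r)
    (la lb : β) (σ1 σ2 σ3 : List β)
    (h1 : ∀ l ∈ σ1, l ∈ ds r ({lb} : Set β))
    (h2 : σ2.length ≤ 1) (h2' : ∀ l ∈ σ2, l = la)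
    (h3 : ∀ l ∈ σ3, l ∈ ds r ({la, lb} : Set β)) :
    mulLe r (msub (lexmax r (σ1 ++ σ2 ++ σ3)) (ds r ({lb} : Set β)))
      ({la} : Multiset β) :=
  decomposition_imp_mulLe_general r la lb σ1 σ2 σ3 h1 h2 h2' h3
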